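/- Let K ∈ {DC, SC}, let A ∈ K_n be complete and atomic, let N be a network over A, let f ∈ edges(N), and let τ ∈ Ω_n be a non-surjective transformation of n. Then f∘τ ∈ edges(N) and N(f∘τ) = τ^A N(f). -/
import Mathlib


namespace CylRep

/-- The replacement `[i/j]` on `n`: fixes everything except sending `i` to `j`. -/
def replFn (n : ℕ) (i j : Fin n) : Fin n → Fin n := fun k => if k = i then j else k

/-- A Boolean algebra equipped with cylindric-type operators: cylindrifications `c i`
and diagonal elements `d i j`. -/
structure CylOps (n : ℕ) (α : Type*) [BooleanAlgebra α] where
  c : Fin n → α → α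
  d : Fin n → Fin n → α

variable {n : ℕ} {α : Type*} {β : Type*}

section Ops
variable [BooleanAlgebra α]

/-- The substitution operator `s^i_j`: `s^i_i x = x`, and `s^i_j x = c_i (x ⊓ d_{ij})` for `i ≠ j`. -/
def CylOps.s (A : CylOps n α) (i j : Fin n) (x : α) : α :=
  if i = j then x else A.c i (x ⊓ A.d i j)

/-- The operator `t^i_j`: `t^i_i x = x`, and `t^i_j x = c_i x ⊓ d_{ij}` for `i ≠ j`. -/
def CylOps.t (A : CylOps n α) (i j : Fin n) (x : α) : α :=
  if i = j then x else A.c i x ⊓ A.d i j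

/-- The term `s^i_j c_j x ⊓ s^j_i c_i x ⊓ ∏_{k ≠ i,j} s^k_i s^i_j s^j_k c_k x`
(the empty product, when `n = 2`, is `⊤`). -/
def CylOps.pRaw (A : CylOps n α) (i j : Fin n) (x : α) : α :=
  A.s i j (A.c j x) ⊓ A.s j i (A.c i x) ⊓
    (Finset.univ.filter (fun k : Fin n => k ≠ i ∧ k ≠ j)).inf
      (fun k => A.s k i (A.s i j (A.s j k (A.c k x))))

/-- The operator `p_{ij}`: `p_{ii} x = x`, and otherwise the term `pRaw`. -/
def CylOps.p (A : CylOps n α) (i j : Fin n) (x : α) : α :=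
  if i = j then x else A.pRaw i j x

/-- `tauSeq is js t = [i_t/j_t] ∘ ⋯ ∘ [i_1/j_1]` (0-indexed: composes the first `t`
replacements, the one of index `0` acting first); `tauSeq is js 0 = id`. -/
def tauSeq (is js : ℕ → Fin n) : ℕ → (Fin n → Fin n)
  | 0 => id
  | t + 1 => replFn n (is t) (js t) ∘ tauSeq is js t

/-- `lhsSeq A is js ks x m = s^{i_m}_{j_m} c_{k_m} ⋯ s^{i_1}_{j_1} c_{k_1} x` (0-indexed). -/
def lhsSeq (A : CylOps n α) (is js ks : ℕ → Fin n) (x : α) : ℕ → α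
  | 0 => x
  | t + 1 => A.s (is t) (js t) (A.c (ks t) (lhsSeq A is js ks x t))

/-- The set `K = {i_1, …, i_m, k_1, …, k_m} \ {i}` (0-indexed). -/
def Kset (m : ℕ) (is ks : ℕ → Fin n) (i : Fin n) : Finset (Fin n) :=
  (((Finset.range m).image is) ∪ ((Finset.range m).image ks)).erase i

/-- Axiom (Ax7): for every `m ≥ 1` and all indices `i_1,…,i_m, j_1,…,j_m, k_1,…,k_m, i`
such that `k_{t+1} ∉ ([i_t/j_t]∘⋯∘[i_1/j_1]) * K` for all `t < m`,
`s^{i_m}_{j_m} c_{k_m} ⋯ s^{i_1}_{j_1} c_{k_1} x ⊓ ∏ {d_{l, τ l} : l ∈ K} ≤ c_i x`,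
where `τ = [i_m/j_m]∘⋯∘[i_1/j_1]` and `K = {i_1,…,i_m,k_1,…,k_m} \ {i}`. -/
def Ax7 (A : CylOps n α) : Prop :=
  ∀ m : ℕ, 1 ≤ m → ∀ (is js ks : ℕ → Fin n) (i : Fin n),
    (∀ t < m, ks t ∉ (Kset m is ks i).image (tauSeq is js t)) →
    ∀ x : α,
      lhsSeq A is js ks x m ⊓
          (Kset m is ks i).inf (fun l => A.d l (tauSeq is js m l)) ≤
        A.c i x

/-- Axiom (Ax11) (stated for general `n` via proofs that `0 < n` and `1 < n`):
`x ⊓ -d_{01} ≤ c_0 c_1 (-d_{01} ⊓ s^0_1 c_1 x ⊓ s^1_0 c_0 x)`. -/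
def Ax11 (A : CylOps n α) : Prop :=
  ∀ (h0 : 0 < n) (h1 : 1 < n) (x : α),
    x ⊓ (A.d ⟨0, h0⟩ ⟨1, h1⟩)ᶜ ≤
      A.c ⟨0, h0⟩ (A.c ⟨1, h1⟩
        ((A.d ⟨0, h0⟩ ⟨1, h1⟩)ᶜ ⊓ A.s ⟨0, h0⟩ ⟨1, h1⟩ (A.c ⟨1, h1⟩ x) ⊓
          A.s ⟨1, h1⟩ ⟨0, h0⟩ (A.c ⟨0, h0⟩ x)))

/-- Axiom (Ax12): `x ≤ c_i c_j (s^i_j c_j x ⊓ s^j_i c_i x ⊓ ∏_{k≠i,j} s^k_i s^i_j s^j_k c_k x)`. -/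
def Ax12 (A : CylOps n α) : Prop :=
  ∀ (i j : Fin n) (x : α), x ≤ A.c i (A.c j (A.pRaw i j x))

/-- Axioms (Ax0)–(Ax6) ((Ax0), the Boolean axioms, being the `BooleanAlgebra` instance). -/
structure IsRC6 (A : CylOps n α) : Prop where
  ax1 : ∀ i, A.c i (⊥ : α) = ⊥
  ax2 : ∀ i (x : α), x ≤ A.c i x
  ax3 : ∀ i (x y : α), A.c i (x ⊓ A.c i y) = A.c i x ⊓ A.c i y
  ax4 : ∀ i, A.d i i = (⊤ : α)
  ax5 : ∀ i j k : Fin n, k ≠ i → k ≠ j →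
    A.d i k ⊓ A.d k j ≤ A.d i j ∧ A.d i j = A.d j i ∧ A.d j i = A.c k (A.d j i)
  ax6 : ∀ (i j : Fin n) (x : α), i ≠ j → A.c i (x ⊓ A.d i j) ⊓ A.d i j ≤ x

/-- The class `RC_n`: axioms (Ax0)–(Ax7). -/
structure IsRC (A : CylOps n α) extends IsRC6 A : Prop where
  ax7 : Ax7 A

/-- Axioms (Ax8)–(Ax10). -/
structure DCAxioms (A : CylOps n α) : Prop where
  ax8 : ∀ (i j k : Fin n) (x : α), k ≠ i → k ≠ j →
    A.c j (A.c i x) ⊓ A.d j k ≤ A.c i (A.c j x)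
  ax9 : ∀ i j k : Fin n, k ≠ i → k ≠ j → A.d i j = A.c k (A.d i k ⊓ A.d k j)
  ax10 : ∀ (i j k m : Fin n) (x : α), k ≠ i → k ≠ j → k ≠ m → m ≠ i → m ≠ j →
    A.s k i (A.s i j (A.s j m (A.s m k (A.c k x)))) =
      A.s k m (A.s m i (A.s i j (A.s j k (A.c k x))))

/-- The class `DC_n`: axioms (Ax0)–(Ax10). -/
structure IsDC (A : CylOps n α) extends IsRC A, DCAxioms A : Prop

/-- The class `SC_n`: `DC_n` together with (Ax11) when `n = 2` and (Ax12) when `n ≥ 3`. -/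
structure IsSC (A : CylOps n α) extends IsDC A : Prop where
  ax11 : n = 2 → Ax11 A
  ax12 : 3 ≤ n → Ax12 A

/-- The class `DC_n⁻`: the axioms of `DC_n` with (Ax7) omitted. -/
structure IsDCminus (A : CylOps n α) extends IsRC6 A, DCAxioms A : Prop

/-- The class `SC_n⁻`: the axioms of `SC_n` with (Ax7) omitted. -/
structure IsSCminus (A : CylOps n α) extends IsDCminus A : Prop where
  ax11 : n = 2 → Ax11 A
  ax12 : 3 ≤ n → Ax12 A

/-- `compList n [(i₁,j₁),…,(iₘ,jₘ)] = [i₁/j₁] ∘ ⋯ ∘ [iₘ/jₘ]` (so `[iₘ/jₘ]` acts first). -/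
def compList (n : ℕ) (L : List (Fin n × Fin n)) : Fin n → Fin n :=
  L.foldr (fun p g => replFn n p.1 p.2 ∘ g) id

/-- `tApplyList A [(i₁,j₁),…,(iₘ,jₘ)] x = t^{iₘ}_{jₘ} ⋯ t^{i₁}_{j₁} x`. -/
def tApplyList (A : CylOps n α) (L : List (Fin n × Fin n)) (x : α) : α :=
  L.foldl (fun y p => A.t p.1 p.2 y) x

end Ops

/-- The three classes of algebras considered. -/
inductive CylClass : Type
  | RC | DC | SC

/-- Membership of `A` in the class `K_n` for `K ∈ {RC, DC, SC}`. -/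
def InClass [BooleanAlgebra α] (κ : CylClass) (A : CylOps n α) : Prop :=
  match κ with
  | CylClass.RC => IsRC A
  | CylClass.DC => IsDC A
  | CylClass.SC => IsSC A

/-- A pre-network: a finite set of nodes together with a partial map (here: a total map
`label` whose meaningful domain is `edges`) from `n`-sequences of nodes to atoms of `α`. -/
structure PreNetwork (n : ℕ) (α : Type*) (β : Type*) [BooleanAlgebra α] where
  nodes : Finset β
  edges : Set (Fin n → β)
  label : (Fin n → β) → α
  edge_nodes : ∀ f ∈ edges, ∀ i, f i ∈ nodes
  label_atom : ∀ f ∈ edges, IsAtom (label f)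

/-- `g ≡_i f`: the sequences agree everywhere except possibly at `i`. -/
def EqExcept (i : Fin n) (f g : Fin n → β) : Prop := ∀ l, l ≠ i → f l = g l

/-- A set of sequences is diagonalizable if it is closed under `f ↦ f ∘ [i/j]`. -/
def Diagonalizable (E : Set (Fin n → β)) : Prop :=
  ∀ f ∈ E, ∀ i j : Fin n, (f ∘ replFn n i j) ∈ E

/-- A set of sequences is permutable if it is closed under `f ↦ f ∘ [i,j]`. -/
def Permutable (E : Set (Fin n → β)) : Prop :=
  ∀ f ∈ E, ∀ i j : Fin n, (fun k => f (Equiv.swap i j k)) ∈ E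

section Net
variable [BooleanAlgebra α]

/-- `h 0, …, h m` is a zigzag from `f` to `g` in the pre-network `N`. -/
def IsZigzag (A : CylOps n α) (N : PreNetwork n α β) (f g : Fin n → β)
    (m : ℕ) (h : ℕ → Fin n → β) : Prop :=
  h 0 = f ∧ h m = g ∧ (∀ t ≤ m, h t ∈ N.edges) ∧
    (∀ t ≤ m, Set.range f ∩ Set.range g ⊆ Set.range (h t)) ∧
    (∀ t < m, ∃ i : Fin n, h t ≠ h (t + 1) ∧ EqExcept i (h t) (h (t + 1)) ∧
      A.c i (N.label (h t)) = A.c i (N.label (h (t + 1))))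

/-- `N` is a network (for the class `κ` over the algebra `A`). -/
def IsNetwork (κ : CylClass) (A : CylOps n α) (N : PreNetwork n α β) : Prop :=
  (κ = CylClass.DC → Diagonalizable N.edges) ∧
  (κ = CylClass.SC → Diagonalizable N.edges ∧ Permutable N.edges) ∧
  (∀ f ∈ N.edges, ∀ i j : Fin n, N.label f ≤ A.d i j ↔ f i = f j) ∧
  (∀ f ∈ N.edges, ∀ g ∈ N.edges,
    0 < (Set.range f ∩ Set.range g).ncard →
    (Set.range f ∩ Set.range g).ncard < n →
    ∃ m h, IsZigzag A N f g m h)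

/-- `N ⊆ N'` for pre-networks. -/
def PNLe (N N' : PreNetwork n α β) : Prop :=
  N.nodes ⊆ N'.nodes ∧ N.edges ⊆ N'.edges ∧ ∀ f ∈ N.edges, N'.label f = N.label f

end Net

/-- The cylindrification `C_i` relativized to the unit `V`. -/
def CSet (V : Set (Fin n → β)) (i : Fin n) (X : Set (Fin n → β)) : Set (Fin n → β) :=
  {f ∈ V | ∃ g ∈ X, ∀ l, l ≠ i → g l = f l}

/-- The diagonal `D_{ij}` relativized to the unit `V`. -/
def DSet (V : Set (Fin n → β)) (i j : Fin n) : Set (Fin n → β) :=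
  {f ∈ V | f i = f j}

/-- `Ψ` is an embedding of `A` into the full relativized cylindric set algebra `P(V)`:
an injective Boolean homomorphism that sends `c_i` to `C_i` and `d_{ij}` to `D_{ij}`. -/
def IsRepresentation [BooleanAlgebra α] (A : CylOps n α) (V : Set (Fin n → β))
    (Ψ : α → Set (Fin n → β)) : Prop :=
  Function.Injective Ψ ∧ (∀ x, Ψ x ⊆ V) ∧
    Ψ ⊥ = ∅ ∧ Ψ ⊤ = V ∧ (∀ x y, Ψ (x ⊔ y) = Ψ x ∪ Ψ y) ∧
    (∀ x y, Ψ (x ⊓ y) = Ψ x ∩ Ψ y) ∧ (∀ x, Ψ xᶜ = V \ Ψ x) ∧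
    (∀ (i : Fin n) (x : α), Ψ (A.c i x) = CSet V i (Ψ x)) ∧
    (∀ i j : Fin n, Ψ (A.d i j) = DSet V i j)


section Aux
variable [BooleanAlgebra α]

lemma replFn_self (n : ℕ) (a x : Fin n) : replFn n a a x = x := by
  by_cases h : x = a <;> simp [replFn, h]

lemma tauSeq_succ' (is js : ℕ → Fin n) (t : ℕ) :
    tauSeq is js (t + 1) = replFn n (is t) (js t) ∘ tauSeq is js t := rfl

lemma lhsSeq_succ' (A : CylOps n α) (is js ks : ℕ → Fin n) (x : α) (t : ℕ) :
    lhsSeq A is js ks x (t + 1) = A.s (is t) (js t) (A.c (ks t) (lhsSeq A is js ks x t)) := rfl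

lemma c_mono' (A : CylOps n α) (h6 : IsRC6 A) (i : Fin n) {x y : α} (hxy : x ≤ y) :
    A.c i x ≤ A.c i y := by
  have h1 : x ⊓ A.c i y = x := inf_eq_left.mpr (hxy.trans (h6.ax2 i y))
  calc A.c i x = A.c i (x ⊓ A.c i y) := by rw [h1]
    _ = A.c i x ⊓ A.c i y := h6.ax3 i x y
    _ ≤ A.c i y := inf_le_right

lemma c_idem' (A : CylOps n α) (h6 : IsRC6 A) (i : Fin n) (x : α) :
    A.c i (A.c i x) = A.c i x := by
  apply le_antisymm
  · have h1 : (⊤ : α) ⊓ A.c i x = A.c i x := top_inf_eq _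
    calc A.c i (A.c i x) = A.c i (⊤ ⊓ A.c i x) := by rw [h1]
      _ = A.c i ⊤ ⊓ A.c i x := h6.ax3 i ⊤ x
      _ ≤ A.c i x := inf_le_right
  · exact h6.ax2 i _

lemma c_ne_bot' (A : CylOps n α) (h6 : IsRC6 A) (i : Fin n) {x : α} (hx : x ≠ ⊥) :
    A.c i x ≠ ⊥ := fun h => hx (le_bot_iff.mp (h ▸ h6.ax2 i x))

lemma le_s' (A : CylOps n α) (h6 : IsRC6 A) (a b : Fin n) {y z : α}
    (hyz : y ≤ z) (hd : a = b ∨ y ≤ A.d a b) : y ≤ A.s a b z := by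
  unfold CylOps.s
  split_ifs with hab
  · exact hyz
  · rcases hd with h | h
    · exact absurd h hab
    · exact (le_inf hyz h).trans (h6.ax2 a _)

lemma t_le_of_atom' (A : CylOps n α) (h6 : IsRC6 A) {x z : α} {i j : Fin n}
    (hij : i ≠ j) (hx : IsAtom x) (hz : z ≠ ⊥)
    (h1 : z ≤ A.c i x) (h2 : z ≤ A.d i j) : A.c i x ⊓ A.d i j ≤ z := by
  have hzc : z ⊓ A.c i x = z := inf_eq_left.mpr h1
  have hc1 : A.c i z ⊓ A.c i x ≠ ⊥ := by
    have := c_ne_bot' A h6 i (x := z ⊓ A.c i x) (by rw [hzc]; exact hz)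
    rw [h6.ax3 i z x] at this
    exact this
  have hxcz : x ⊓ A.c i z ≠ ⊥ := by
    intro hbot
    have hb2 : A.c i (x ⊓ A.c i z) = ⊥ := by rw [hbot, h6.ax1]
    rw [h6.ax3 i x z] at hb2
    exact hc1 (by rw [inf_comm]; exact hb2)
  have hxle : x ≤ A.c i z := by
    by_contra hcon
    have hlt : x ⊓ A.c i z < x :=
      lt_of_le_of_ne inf_le_left (fun he => hcon (by rw [← he]; exact inf_le_right))
    exact hxcz (hx.2 _ hlt)
  have hcix : A.c i x ≤ A.c i z := by
    calc A.c i x ≤ A.c i (A.c i z) := c_mono' A h6 i hxle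
      _ = A.c i z := c_idem' A h6 i z
  have hz2 : A.c i z = A.c i (z ⊓ A.d i j) := by rw [inf_eq_left.mpr h2]
  calc A.c i x ⊓ A.d i j ≤ A.c i (z ⊓ A.d i j) ⊓ A.d i j := by
        exact inf_le_inf_right _ (by rw [← hz2]; exact hcix)
    _ ≤ z := h6.ax6 i j z hij

/-- The key zigzag argument: if `g` agrees with `f` off `i`, both are connected by a
zigzag whose every edge contains `Rng g` in its range, then `N(g) ≤ c_i N(f)`,
via an instance of axiom (Ax7). -/
lemma zigzag_le (A : CylOps n α) (h6 : IsRC6 A) (h7 : Ax7 A)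
    (N : PreNetwork n α β)
    (hb : ∀ f ∈ N.edges, ∀ i j : Fin n, N.label f ≤ A.d i j ↔ f i = f j)
    (f g : Fin n → β) (i : Fin n)
    (hgf : ∀ l, l ≠ i → g l = f l)
    (m : ℕ) (h : ℕ → Fin n → β)
    (hz : IsZigzag A N f g m h)
    (hedge : ∀ t ≤ m, h t ∈ N.edges)
    (hrg : ∀ t ≤ m, Set.range g ⊆ Set.range (h t)) :
    N.label g ≤ A.c i (N.label f) := by
  classical
  obtain ⟨hz0, hzm, -, -, hzS⟩ := hz
  choose κ₀ hκ₀ using hzS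
  obtain ⟨κ, hκ⟩ : ∃ κ : ℕ → Fin n, ∀ t (ht : t < m),
      h t ≠ h (t + 1) ∧ EqExcept (κ t) (h t) (h (t + 1)) ∧
        A.c (κ t) (N.label (h t)) = A.c (κ t) (N.label (h (t + 1))) :=
    ⟨fun t => if ht : t < m then κ₀ t ht else i, fun t ht => by
      simp only [dif_pos ht]; exact hκ₀ t ht⟩
  obtain ⟨ks, hks0, hksS⟩ : ∃ ks : ℕ → Fin n, ks 0 = i ∧ ∀ t, t < m → ks (t + 1) = κ t :=
    ⟨fun t => Nat.rec i (fun t' _ => κ t') t, rfl, fun t _ => rfl⟩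
  obtain ⟨is, js, hpick⟩ : ∃ is js : ℕ → Fin n, ∀ t,
      ((∃ p, p ≠ ks (t + 1) ∧ h t p = h t (ks (t + 1))) →
        is t = ks (t + 1) ∧ js t ≠ ks (t + 1) ∧ h t (js t) = h t (ks (t + 1))) ∧
      ((¬ ∃ p, p ≠ ks (t + 1) ∧ h t p = h t (ks (t + 1))) → is t = js t) := by
    refine ⟨fun t => if hp : ∃ p, p ≠ ks (t + 1) ∧ h t p = h t (ks (t + 1))
        then ks (t + 1) else i,
      fun t => if hp : ∃ p, p ≠ ks (t + 1) ∧ h t p = h t (ks (t + 1))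
        then hp.choose else i,
      fun t => ⟨fun hp => ?_, fun hp => ?_⟩⟩
    · refine ⟨dif_pos hp, ?_, ?_⟩
      · simp only [dif_pos hp]; exact hp.choose_spec.1
      · simp only [dif_pos hp]; exact hp.choose_spec.2
    · simp only [dif_neg hp]
  have hdiag' : ∀ t, is t = js t ∨ h t (is t) = h t (js t) := by
    intro t
    by_cases hp : ∃ p, p ≠ ks (t + 1) ∧ h t p = h t (ks (t + 1))
    · obtain ⟨e1, _, e3⟩ := (hpick t).1 hp
      right; rw [e1, e3]
    · exact Or.inl ((hpick t).2 hp)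
  -- the tracking invariant
  have Inv : ∀ t, t ≤ m → ∀ l, l ≠ i →
      (h t (tauSeq is js t l) = g l ∧ (0 < t → tauSeq is js t l ≠ ks t)) := by
    intro t
    induction t with
    | zero =>
      intro _ l hl
      refine ⟨?_, fun h0 => absurd h0 (by omega)⟩
      show h 0 l = g l
      rw [hz0]; exact (hgf l hl).symm
    | succ t ih =>
      intro ht1 l hl
      have ht : t < m := Nat.lt_of_succ_le ht1
      have IH : h t (tauSeq is js t l) = g l := (ih (Nat.le_of_lt ht) l hl).1
      have hkst : ks (t + 1) = κ t := hksS t ht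
      obtain ⟨hne, heqe, -⟩ := hκ t ht
      have key : h t (tauSeq is js (t + 1) l) = g l ∧ tauSeq is js (t + 1) l ≠ ks (t + 1) := by
        rw [tauSeq_succ']
        show h t (replFn n (is t) (js t) (tauSeq is js t l)) = g l ∧
          replFn n (is t) (js t) (tauSeq is js t l) ≠ ks (t + 1)
        by_cases hp : ∃ p, p ≠ ks (t + 1) ∧ h t p = h t (ks (t + 1))
        · obtain ⟨e1, e2, e3⟩ := (hpick t).1 hp
          rw [e1]
          by_cases hσ : tauSeq is js t l = ks (t + 1)
          · rw [hσ]
            have hr : replFn n (ks (t + 1)) (js t) (ks (t + 1)) = js t := by simp [replFn]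
            rw [hr]
            refine ⟨?_, e2⟩
            rw [e3, ← hσ]; exact IH
          · have hr : replFn n (ks (t + 1)) (js t) (tauSeq is js t l) = tauSeq is js t l := by
              simp [replFn, hσ]
            rw [hr]; exact ⟨IH, hσ⟩
        · have e := (hpick t).2 hp
          have hr : replFn n (is t) (js t) (tauSeq is js t l) = tauSeq is js t l := by
            rw [e]; exact replFn_self n _ _
          rw [hr]
          refine ⟨IH, fun hσ => ?_⟩
          obtain ⟨q, hq⟩ := hrg (t + 1) ht1 ⟨l, rfl⟩
          have hvt : h t (ks (t + 1)) = g l := by rw [← hσ]; exact IH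
          by_cases hqk : q = κ t
          · apply hne
            funext x
            by_cases hxk : x = κ t
            · subst hqk
              rw [hxk, ← hkst, hvt, hkst, hq]
            · exact heqe x hxk
          · exact hp ⟨q, by rw [hkst]; exact hqk, by rw [heqe q hqk, hq, hvt]⟩
      have h1 : h (t + 1) (tauSeq is js (t + 1) l) = g l := by
        rw [← heqe _ (by rw [← hkst]; exact key.2)]
        exact key.1
      exact ⟨h1, fun _ => key.2⟩
  -- the chain of inequalities along the zigzag
  have Chain : ∀ t, t ≤ m → N.label (h t) ≤ lhsSeq A is js ks (N.label f) (t + 1) := by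
    intro t
    induction t with
    | zero =>
      intro _
      rw [lhsSeq_succ']
      apply le_s' A h6
      · rw [hz0]; exact h6.ax2 (ks 0) (N.label f)
      · rcases hdiag' 0 with he | he
        · exact Or.inl he
        · exact Or.inr ((hb (h 0) (hedge 0 (Nat.zero_le m)) (is 0) (js 0)).mpr he)
    | succ t ih =>
      intro ht1
      have ht : t < m := Nat.lt_of_succ_le ht1
      rw [lhsSeq_succ']
      apply le_s' A h6
      · calc N.label (h (t + 1)) ≤ A.c (ks (t + 1)) (N.label (h (t + 1))) := h6.ax2 _ _
          _ = A.c (ks (t + 1)) (N.label (h t)) := by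
              rw [hksS t ht]; exact ((hκ t ht).2.2).symm
          _ ≤ A.c (ks (t + 1)) (lhsSeq A is js ks (N.label f) (t + 1)) :=
              c_mono' A h6 (ks (t + 1)) (ih (Nat.le_of_lt ht))
      · rcases hdiag' (t + 1) with he | he
        · exact Or.inl he
        · exact Or.inr ((hb (h (t + 1)) (hedge (t + 1) ht1) _ _).mpr he)
  -- the side condition of (Ax7)
  have side : ∀ t, t < m + 1 → ks t ∉ (Kset (m + 1) is ks i).image (tauSeq is js t) := by
    intro t ht hmem
    obtain ⟨l, hlK, hlτ⟩ := Finset.mem_image.mp hmem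
    have hli : l ≠ i := Finset.ne_of_mem_erase hlK
    cases t with
    | zero =>
      apply hli
      have : tauSeq is js 0 l = i := by rw [hlτ, hks0]
      exact this
    | succ t' =>
      exact ((Inv (t' + 1) (by omega) l hli).2 (Nat.succ_pos t')) hlτ
  have hgE : g ∈ N.edges := by rw [← hzm]; exact hedge m le_rfl
  have l1 : N.label g ≤ lhsSeq A is js ks (N.label f) (m + 1) := by
    rw [← hzm]; exact Chain m le_rfl
  have l2 : N.label g ≤ (Kset (m + 1) is ks i).inf
      (fun l => A.d l (tauSeq is js (m + 1) l)) := by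
    apply Finset.le_inf
    intro l hl
    have hli : l ≠ i := Finset.ne_of_mem_erase hl
    apply (hb g hgE l _).mpr
    have hInv : g (tauSeq is js m l) = g l := by
      have hInv0 := (Inv m le_rfl l hli).1
      rw [hzm] at hInv0; exact hInv0
    rw [tauSeq_succ']
    show g l = g (replFn n (is m) (js m) (tauSeq is js m l))
    by_cases hp : ∃ p, p ≠ ks (m + 1) ∧ h m p = h m (ks (m + 1))
    · obtain ⟨e1, e2, e3⟩ := (hpick m).1 hp
      rw [e1]
      by_cases hσ : tauSeq is js m l = ks (m + 1)
      · have hr : replFn n (ks (m + 1)) (js m) (tauSeq is js m l) = js m := by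
          rw [hσ]; simp [replFn]
        rw [hr]
        have e3' : g (js m) = g (ks (m + 1)) := by
          have := e3; rw [hzm] at this; exact this
        rw [e3', ← hσ, hInv]
      · have hr : replFn n (ks (m + 1)) (js m) (tauSeq is js m l) = tauSeq is js m l := by
          simp [replFn, hσ]
        rw [hr]; exact hInv.symm
    · have e := (hpick m).2 hp
      have hr : replFn n (is m) (js m) (tauSeq is js m l) = tauSeq is js m l := by
        rw [e]; exact replFn_self n _ _
      rw [hr]; exact hInv.symm
  exact le_trans (le_inf l1 l2) (h7 (m + 1) (by omega) is js ks i side (N.label f))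

/-- One replacement step: `f ∘ [i/j]` is an edge with label `t^i_j N(f)`. -/
lemma one_step {n : ℕ} (hn : 2 ≤ n) {α β : Type*} [BooleanAlgebra α]
    (A : CylOps n α) (hRC : IsRC A) (N : PreNetwork n α β)
    (hdiag : Diagonalizable N.edges)
    (hb : ∀ f ∈ N.edges, ∀ i j : Fin n, N.label f ≤ A.d i j ↔ f i = f j)
    (hzz : ∀ f ∈ N.edges, ∀ g ∈ N.edges,
      0 < (Set.range f ∩ Set.range g).ncard →
      (Set.range f ∩ Set.range g).ncard < n →
      ∃ m h, IsZigzag A N f g m h)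
    (f : Fin n → β) (hf : f ∈ N.edges) (i j : Fin n) :
    (f ∘ replFn n i j) ∈ N.edges ∧
      N.label (f ∘ replFn n i j) = A.t i j (N.label f) := by
  classical
  have h6 := hRC.toIsRC6
  by_cases hij : i = j
  · subst hij
    have hfe : f ∘ replFn n i i = f := funext fun l => by
      show f (replFn n i i l) = f l
      rw [replFn_self]
    rw [hfe]
    exact ⟨hf, by simp [CylOps.t]⟩
  · have hg : (f ∘ replFn n i j) ∈ N.edges := hdiag f hf i j
    set g := f ∘ replFn n i j with hgdef
    have hgf : ∀ l, l ≠ i → g l = f l := fun l hl => by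
      simp [hgdef, replFn, Function.comp, hl]
    have hgi : g i = f j := by simp [hgdef, replFn, Function.comp]
    have hgj : g j = f j := hgf j (Ne.symm hij)
    have hdgij : N.label g ≤ A.d i j := (hb g hg i j).mpr (by rw [hgi, hgj])
    have hcif : N.label g ≤ A.c i (N.label f) := by
      by_cases hfg : g = f
      · rw [hfg]; exact h6.ax2 i _
      · have hsub : Set.range g ⊆ Set.range f := by
          rintro v ⟨l, rfl⟩; exact ⟨replFn n i j l, rfl⟩
        have hinter : Set.range f ∩ Set.range g = Set.range g :=
          Set.inter_eq_self_of_subset_right hsub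
        haveI hne' : Nonempty (Fin n) := ⟨⟨0, by omega⟩⟩
        have hpos : 0 < (Set.range f ∩ Set.range g).ncard := by
          rw [hinter]
          exact (Set.ncard_pos (Set.finite_range g)).mpr (Set.range_nonempty g)
        have hlt : (Set.range f ∩ Set.range g).ncard < n := by
          rw [hinter]
          have h5 : Set.range g ⊆ f '' {l : Fin n | l ≠ i} := by
            rintro v ⟨l, rfl⟩
            refine ⟨replFn n i j l, ?_, rfl⟩
            show replFn n i j l ≠ i
            unfold replFn
            split_ifs with hli
            · exact Ne.symm hij
            · exact hli
          have h7 : ({l : Fin n | l ≠ i}).ncard = n - 1 := by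
            have he : {l : Fin n | l ≠ i} = Set.univ \ {i} := by ext x; simp
            rw [he, Set.ncard_diff (by simp) (Set.toFinite _)]
            simp [Set.ncard_univ, Nat.card_eq_fintype_card]
          calc (Set.range g).ncard ≤ (f '' {l : Fin n | l ≠ i}).ncard :=
                Set.ncard_le_ncard h5 (Set.toFinite _)
            _ ≤ ({l : Fin n | l ≠ i}).ncard := Set.ncard_image_le (Set.toFinite _)
            _ = n - 1 := h7
            _ < n := by omega
        obtain ⟨m, h, hz⟩ := hzz f hf g hg hpos hlt
        have hedge : ∀ t ≤ m, h t ∈ N.edges := hz.2.2.1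
        have hrg : ∀ t ≤ m, Set.range g ⊆ Set.range (h t) := fun t htm v hv =>
          hz.2.2.2.1 t htm ⟨hsub hv, hv⟩
        exact zigzag_le A h6 hRC.ax7 N hb f g i hgf m h hz hedge hrg
    have hatomg := N.label_atom g hg
    have hatomf := N.label_atom f hf
    have h1 : N.label g ≤ A.c i (N.label f) ⊓ A.d i j := le_inf hcif hdgij
    have h2 : A.c i (N.label f) ⊓ A.d i j ≤ N.label g :=
      t_le_of_atom' A h6 hij hatomf hatomg.1 hcif hdgij
    refine ⟨hg, ?_⟩
    have ht : A.t i j (N.label f) = A.c i (N.label f) ⊓ A.d i j := by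
      simp [CylOps.t, hij]
    rw [ht]
    exact le_antisymm h1 h2

end Aux

/-- for `K ∈ {DC, SC}`, complete atomic `A ∈ K_n`, a network `N`,
`f ∈ edges(N)`, and non-surjective `τ` (decomposed into replacements as
`τ = [i₁/j₁]∘⋯∘[iₘ/jₘ]`): `f ∘ τ ∈ edges(N)` and `N(f ∘ τ) = τ^A N(f)`. -/
theorem statement_8 (n : ℕ) (hn : 2 ≤ n) {α : Type*} {β : Type*}
    [CompleteBooleanAlgebra α] [IsAtomic α]
    (κ : CylClass) (hκ : κ = CylClass.DC ∨ κ = CylClass.SC)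
    (A : CylOps n α) (hA : InClass κ A)
    (N : PreNetwork n α β) (hN : IsNetwork κ A N)
    (f : Fin n → β) (hf : f ∈ N.edges)
    (τ : Fin n → Fin n) (hτ : ¬ Function.Surjective τ)
    (L : List (Fin n × Fin n)) (hL : compList n L = τ) :
    (f ∘ τ) ∈ N.edges ∧ N.label (f ∘ τ) = tApplyList A L (N.label f) := by
  classical
  have hmain : IsRC A ∧ Diagonalizable N.edges := by
    rcases hκ with rfl | rfl
    · exact ⟨(show IsDC A from hA).toIsRC, hN.1 rfl⟩
    · exact ⟨(show IsSC A from hA).toIsDC.toIsRC, (hN.2.1 rfl).1⟩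
  obtain ⟨hRC, hdiag⟩ := hmain
  have hb := hN.2.2.1
  have hzz := hN.2.2.2
  suffices H : ∀ (L : List (Fin n × Fin n)) (f : Fin n → β), f ∈ N.edges →
      (f ∘ compList n L) ∈ N.edges ∧
        N.label (f ∘ compList n L) = tApplyList A L (N.label f) by
    rw [← hL]; exact H L f hf
  intro L
  induction L with
  | nil =>
    intro f hf
    have h1 : f ∘ compList n [] = f := rfl
    rw [h1]
    exact ⟨hf, rfl⟩
  | cons p L' ih =>
    intro f hf
    have h1 := one_step hn A hRC N hdiag hb hzz f hf p.1 p.2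
    have h2 := ih (f ∘ replFn n p.1 p.2) h1.1
    have hcomp : f ∘ compList n (p :: L') = (f ∘ replFn n p.1 p.2) ∘ compList n L' := rfl
    rw [hcomp]
    refine ⟨h2.1, ?_⟩
    rw [h2.2, h1.2]
    rfl

end CylRep
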